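/- Let (u_i, ũ_i)_{i=1}^m be real pairs with u_i ≠ ũ_i, let τ ∈ ℝ, and define e_j = m · 1{u_j ≤ τ ∧ ũ_j} / (1 + Σ_{i=1}^m 1{ũ_i ≤ τ ∧ u_i}). Suppose the rejection set R = {j : u_j ≤ τ ∧ ũ_j} satisfies (1 + Σ_i 1{ũ_i ≤ τ ∧ u_i}) / |R| ≤ α (with |R| ≥ 1). Then for every j ∈ R, e_j ≥ m/(α·|R|), and consequently applying the e-BH procedure at level α to (e_1,...,e_m) — i.e., rejecting {j : e_j ≥ e_{(k̂)}} where e_{(1)} ≥ ... ≥ e_{(m)} and k̂ = max{i : i·e_{(i)}/m ≥ 1/α} — yields exactly the rejection set R. -/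
import Mathlib


open Finset

/-- Mirror denominator `1 + Σ_i 1{ũ_i ≤ τ ∧ u_i}`. -/
noncomputable def mirrorDen (m : ℕ) (u ut : Fin m → ℝ) (τ : ℝ) : ℝ :=
  1 + ∑ i, if ut i ≤ min τ (u i) then (1 : ℝ) else 0

/-- The generalized e-values `e_j = m·1{u_j ≤ τ ∧ ũ_j} / (1 + Σ_i 1{ũ_i ≤ τ ∧ u_i})`. -/
noncomputable def mirrorE (m : ℕ) (u ut : Fin m → ℝ) (τ : ℝ) (j : Fin m) : ℝ :=
  (m : ℝ) * (if u j ≤ min τ (ut j) then (1 : ℝ) else 0) / mirrorDen m u ut τ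

/-- The rejection set `R = {j : u_j ≤ τ ∧ ũ_j}`. -/
noncomputable def mirrorRej (m : ℕ) (u ut : Fin m → ℝ) (τ : ℝ) : Finset (Fin m) :=
  Finset.univ.filter fun j => u j ≤ min τ (ut j)

/-- `orderStat e k` is the `k`-th largest value among `e_1,…,e_m`
(characterized as the largest `x` with at least `k` of the `e_j` being `≥ x`). -/
noncomputable def orderStat (m : ℕ) (e : Fin m → ℝ) (k : ℕ) : ℝ :=
  sSup {x : ℝ | k ≤ (Finset.univ.filter fun j => x ≤ e j).card}

/-- The e-BH cutoff index `k̂ = max{i : i·e_(i)/m ≥ 1/α}`. -/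
noncomputable def eBHIndex (m : ℕ) (α : ℝ) (e : Fin m → ℝ) : ℕ :=
  ((Finset.Icc 1 m).filter fun (i : ℕ) => (1 : ℝ) / α ≤ (i : ℝ) * orderStat m e i / m).sup id

/-- The e-BH rejection set `{j : e_j ≥ e_(k̂)}`. -/
noncomputable def eBHRej (m : ℕ) (α : ℝ) (e : Fin m → ℝ) : Finset (Fin m) :=
  Finset.univ.filter fun j => orderStat m e (eBHIndex m α e) ≤ e j

/-- if the mirror-threshold condition
`(1 + Σ_i 1{ũ_i ≤ τ ∧ u_i}) / |R| ≤ α` holds (with `R` nonempty), then every rejected `j`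
has `e_j ≥ m/(α|R|)`, and the e-BH procedure at level `α` applied to these e-values
recovers exactly the rejection set `R`. -/
theorem stmt7 (m : ℕ) (hm : 0 < m) (u ut : Fin m → ℝ) (hne : ∀ j, u j ≠ ut j)
    (τ α : ℝ) (hα : 0 < α)
    (hR : (mirrorRej m u ut τ).Nonempty)
    (hthr : mirrorDen m u ut τ / (mirrorRej m u ut τ).card ≤ α) :
    (∀ j ∈ mirrorRej m u ut τ,
        (m : ℝ) / (α * (mirrorRej m u ut τ).card) ≤ mirrorE m u ut τ j) ∧
    eBHRej m α (mirrorE m u ut τ) = mirrorRej m u ut τ := by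
  set R := mirrorRej m u ut τ with hRdef
  set D := mirrorDen m u ut τ with hDdef
  set r := R.card with hrdef
  have hD1 : 1 ≤ D := by
    have : (0:ℝ) ≤ ∑ i, if ut i ≤ min τ (u i) then (1 : ℝ) else 0 :=
      Finset.sum_nonneg fun i _ => by positivity
    rw [hDdef]; unfold mirrorDen; linarith
  have hD0 : (0:ℝ) < D := lt_of_lt_of_le one_pos hD1
  have hr0 : 0 < r := Finset.card_pos.mpr hR
  have hr0' : (0:ℝ) < r := by exact_mod_cast hr0
  have hrm : r ≤ m := by
    rw [hrdef]
    simpa using Finset.card_le_univ R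
  have hDr : D ≤ α * r := by
    have := (div_le_iff₀ hr0').mp hthr
    linarith
  have he : ∀ j, mirrorE m u ut τ j = if j ∈ R then (m:ℝ) / D else 0 := by
    intro j
    unfold mirrorE
    rw [← hDdef]
    by_cases hj : u j ≤ min τ (ut j)
    · have hjR : j ∈ R := by
        rw [hRdef]; unfold mirrorRej
        simp only [Finset.mem_filter, Finset.mem_univ, true_and]; exact hj
      simp [hj, hjR]
    · have hjR : j ∉ R := by
        rw [hRdef]; unfold mirrorRej
        simp only [Finset.mem_filter, Finset.mem_univ, true_and]; exact hj
      simp [hj, hjR]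
  have hmD : (0:ℝ) < (m:ℝ)/D := by positivity
  have hcount : ∀ x : ℝ, (Finset.univ.filter fun j => x ≤ mirrorE m u ut τ j).card =
      if x ≤ 0 then m else if x ≤ (m:ℝ)/D then r else 0 := by
    intro x
    by_cases h0 : x ≤ 0
    · rw [if_pos h0, Finset.filter_true_of_mem, Finset.card_univ, Fintype.card_fin]
      intro j _
      rw [he j]
      by_cases hj : j ∈ R
      · simp only [if_pos hj]; linarith
      · simp only [if_neg hj]; linarith
    · rw [if_neg h0]
      by_cases h1 : x ≤ (m:ℝ)/D
      · rw [if_pos h1]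
        congr 1
        ext j
        simp only [Finset.mem_filter, Finset.mem_univ, true_and, he j]
        by_cases hj : j ∈ R
        · simp [hj, h1]
        · simp [hj, h0]
      · rw [if_neg h1]
        rw [Finset.filter_false_of_mem, Finset.card_empty]
        intro j _
        rw [he j]
        by_cases hj : j ∈ R
        · simp only [if_pos hj]; linarith
        · simp only [if_neg hj]; linarith
  have hOS1 : ∀ k : ℕ, 1 ≤ k → k ≤ r → orderStat m (mirrorE m u ut τ) k = (m:ℝ)/D := by
    intro k hk1 hkr
    unfold orderStat
    have hset : {x : ℝ | k ≤ (Finset.univ.filter fun j => x ≤ mirrorE m u ut τ j).card}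
        = Set.Iic ((m:ℝ)/D) := by
      ext x
      simp only [Set.mem_setOf_eq, Set.mem_Iic, hcount x]
      split_ifs with h0 h1
      · have hx : x ≤ (m:ℝ)/D := le_trans h0 hmD.le
        exact iff_of_true (hkr.trans hrm) hx
      · exact iff_of_true hkr h1
      · exact iff_of_false (by omega) h1
    rw [hset, csSup_Iic]
  have hOS2 : ∀ k : ℕ, r < k → orderStat m (mirrorE m u ut τ) k = 0 := by
    intro k hrk
    unfold orderStat
    by_cases hkm : k ≤ m
    · have hset : {x : ℝ | k ≤ (Finset.univ.filter fun j => x ≤ mirrorE m u ut τ j).card}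
          = Set.Iic (0:ℝ) := by
        ext x
        simp only [Set.mem_setOf_eq, Set.mem_Iic, hcount x]
        split_ifs with h0 h1
        · exact iff_of_true hkm h0
        · exact iff_of_false (by omega) h0
        · exact iff_of_false (by omega) h0
      rw [hset, csSup_Iic]
    · have hset : {x : ℝ | k ≤ (Finset.univ.filter fun j => x ≤ mirrorE m u ut τ j).card}
          = (∅ : Set ℝ) := by
        ext x
        simp only [Set.mem_setOf_eq, Set.mem_empty_iff_false, iff_false, hcount x]
        split_ifs <;> omega
      rw [hset]
      exact Real.sSup_empty
  have hIdx : eBHIndex m α (mirrorE m u ut τ) = r := by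
    unfold eBHIndex
    apply le_antisymm
    · apply Finset.sup_le
      intro i hi
      simp only [Finset.mem_filter, Finset.mem_Icc] at hi
      obtain ⟨⟨hi1, him⟩, hcond⟩ := hi
      by_contra hir
      push_neg at hir
      rw [hOS2 i hir, mul_zero, zero_div] at hcond
      have : (0:ℝ) < 1/α := by positivity
      linarith
    · have hrmem : r ∈ (Finset.Icc 1 m).filter
          (fun i : ℕ => (1:ℝ)/α ≤ (i:ℝ) * orderStat m (mirrorE m u ut τ) i / m) := by
        rw [Finset.mem_filter, Finset.mem_Icc]
        refine ⟨⟨hr0, hrm⟩, ?_⟩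
        rw [hOS1 r hr0 le_rfl]
        have hmne : (m:ℝ) ≠ 0 := by positivity
        have heq : (r:ℝ) * ((m:ℝ)/D) / m = (r:ℝ)/D := by field_simp
        rw [heq, div_le_div_iff₀ hα hD0]
        linarith
      exact Finset.le_sup (f := id) hrmem
  constructor
  · intro j hj
    rw [he j, if_pos hj]
    exact div_le_div_of_nonneg_left (by positivity) hD0 hDr
  · unfold eBHRej
    rw [hIdx, hOS1 r hr0 le_rfl]
    ext j
    simp only [Finset.mem_filter, Finset.mem_univ, true_and, he j]
    by_cases hj : j ∈ R
    · simp [hj]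
    · simp only [if_neg hj, iff_false_intro hj, iff_false, not_le]
      exact hmD
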